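/- arXiv:2406.06945 — 2 statements merged into one kernel-verified Lean document; each statement's English description precedes it below -/
import Mathlib

section
/- Let Y be a real-valued random variable with all absolute moments finite and fix a nonzero real λ. Then for all integers n≥k≥1, S_{1,λ}^Y(n,k) = (1/k) Σ_{j=k−1}^{n−1} C(n,j) (−1)^{n−j−1} S_{1,λ}^Y(j,k−1) κ_{n−j,λ}(Y), where C(n,j) is the binomial coefficient. -/
open MeasureTheory Finset

noncomputable section

/-- The degenerate falling factorial `(x)_{n,λ} = x(x-λ)⋯(x-(n-1)λ)`. -/
def dff (lam x : ℝ) (n : ℕ) : ℝ := ∏ i ∈ Finset.range n, (x - i * lam)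

/-- The degenerate rising factorial `⟨x⟩_{n,λ} = x(x+λ)⋯(x+(n-1)λ)`. -/
def drf (lam x : ℝ) (n : ℕ) : ℝ := ∏ i ∈ Finset.range n, (x + i * lam)

/-- The ordinary falling factorial `(x)_n = x(x-1)⋯(x-n+1)`. -/
def ffall (x : ℝ) (n : ℕ) : ℝ := ∏ i ∈ Finset.range n, (x - i)

/-- The ordinary rising factorial `⟨x⟩_n = x(x+1)⋯(x+n-1)`. -/
def frise (x : ℝ) (n : ℕ) : ℝ := ∏ i ∈ Finset.range n, (x + i)

/-- Composition `f ∘ g` of formal power series, valid when `g` has zero constant term. -/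
def pscomp (f g : PowerSeries ℝ) : PowerSeries ℝ :=
  PowerSeries.mk fun n =>
    ∑ k ∈ Finset.range (n + 1), PowerSeries.coeff k f * PowerSeries.coeff n (g ^ k)

/-- The degenerate moment generating series `F_Y = Σ_{n≥0} E[(Y)_{n,λ}] X^n/n!`. -/
def momSeries (lam : ℝ) {Ω : Type*} [MeasurableSpace Ω] (μ : Measure Ω) (Y : Ω → ℝ) :
    PowerSeries ℝ :=
  PowerSeries.mk fun n => (∫ ω, dff lam (Y ω) n ∂μ) / (n.factorial : ℝ)

/-- Taylor series at `u = 0` of the degenerate logarithm `log_λ(1+u)`: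
`Σ_{n≥1} λ^{n-1} (1)_{n,1/λ} u^n/n!`. -/
def degLogSeries (lam : ℝ) : PowerSeries ℝ :=
  PowerSeries.mk fun n => if n = 0 then 0 else lam ^ (n - 1) * dff (1 / lam) 1 n / (n.factorial : ℝ)

/-- `G_Y`, the degenerate cumulant generating series `log_{-λ}(F_Y)`, i.e. the substitution of
`F_Y - 1` into the Taylor series of `log_{-λ}(1+u)`. -/
def cumSeries (lam : ℝ) {Ω : Type*} [MeasurableSpace Ω] (μ : Measure Ω) (Y : Ω → ℝ) :
    PowerSeries ℝ :=
  pscomp (degLogSeries (-lam)) (momSeries lam μ Y - 1)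

/-- The degenerate cumulants `κ_{n,λ}(Y) := n!·(coefficient of X^n in G_Y)`. -/
def degCumulant (lam : ℝ) {Ω : Type*} [MeasurableSpace Ω] (μ : Measure Ω) (Y : Ω → ℝ)
    (n : ℕ) : ℝ :=
  (n.factorial : ℝ) * PowerSeries.coeff n (cumSeries lam μ Y)

/-- The probabilistic degenerate Stirling numbers of the second kind
`{n brace k}_{Y,λ} := n!·(coefficient of X^n in (F_Y - 1)^k/k!)`. -/
def braceY (lam : ℝ) {Ω : Type*} [MeasurableSpace Ω] (μ : Measure Ω) (Y : Ω → ℝ)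
    (n k : ℕ) : ℝ :=
  (n.factorial : ℝ) * PowerSeries.coeff n ((momSeries lam μ Y - 1) ^ k) / (k.factorial : ℝ)

/-- The probabilistic degenerate Stirling numbers of the first kind, defined by
`(-1)^{n-k} S_{1,λ}^Y(n,k) := n!·(coefficient of X^n in G_Y^k/k!)`. -/
def S1Y (lam : ℝ) {Ω : Type*} [MeasurableSpace Ω] (μ : Measure Ω) (Y : Ω → ℝ)
    (n k : ℕ) : ℝ :=
  (-1 : ℝ) ^ (n - k) * ((n.factorial : ℝ) * PowerSeries.coeff n ((cumSeries lam μ Y) ^ k) / (k.factorial : ℝ))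

/-- Taylor series of `log(1+u)`: `Σ_{n≥1} (-1)^{n-1} u^n/n`. -/
def logSeries : PowerSeries ℝ :=
  PowerSeries.mk fun n => if n = 0 then 0 else (-1 : ℝ) ^ (n - 1) / n

/-- `F^x := exp (x · Log F)` for a power series `F` with constant term `1`. -/
def psPow (F : PowerSeries ℝ) (x : ℝ) : PowerSeries ℝ :=
  pscomp (PowerSeries.exp ℝ) (PowerSeries.C x * pscomp logSeries (F - 1))

/-- `F ↦ F/X`, i.e. the shift sending `Σ a_{n+1} X^{n+1}` (with `a_0 = 0`) to `Σ a_{n+1} X^n`. -/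
def shiftDown (F : PowerSeries ℝ) : PowerSeries ℝ :=
  PowerSeries.mk fun n => PowerSeries.coeff (n + 1) F

/-- The probabilistic degenerate Bernoulli polynomials associated with `Y`:
`Σ_{n≥0} β_{n,λ}^Y(x) X^n/n! = (X/(F_Y-1))·F_Y^x`. -/
def probBernoulli (lam : ℝ) {Ω : Type*} [MeasurableSpace Ω] (μ : Measure Ω) (Y : Ω → ℝ)
    (n : ℕ) (x : ℝ) : ℝ :=
  (n.factorial : ℝ) *
    PowerSeries.coeff n ((shiftDown (momSeries lam μ Y - 1))⁻¹ * psPow (momSeries lam μ Y) x)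

/-- The probabilistic degenerate Euler polynomials associated with `Y`:
`Σ_{n≥0} 𝓔_{n,λ}^Y(x) X^n/n! = (2/(F_Y+1))·F_Y^x`. -/
def probEuler (lam : ℝ) {Ω : Type*} [MeasurableSpace Ω] (μ : Measure Ω) (Y : Ω → ℝ)
    (n : ℕ) (x : ℝ) : ℝ :=
  (n.factorial : ℝ) *
    PowerSeries.coeff n
      (PowerSeries.C (2 : ℝ) * (momSeries lam μ Y + 1)⁻¹ * psPow (momSeries lam μ Y) x)

/-! The recurrence is a purely formal identity: writing `G_Y^k/k! = (1/k) · (G_Y^{k-1}/(k-1)!) · G_Y`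
and comparing coefficients of `X^n` gives it, where only `k-1 ≤ j ≤ n-1` contribute because
`G_Y` has no constant term. -/

open PowerSeries in
theorem PowerSeries.coeff_pow_succ_eq_sum_Icc {R : Type*} [CommSemiring R] {f : R⟦X⟧}
    (hf : constantCoeff f = 0) (m n : ℕ) :
    coeff n (f ^ (m + 1)) = ∑ j ∈ Icc m (n - 1), coeff j (f ^ m) * coeff (n - j) f := by
  rw [pow_succ, coeff_mul, Nat.sum_antidiagonal_eq_sum_range_succ_mk]
  refine (sum_subset (fun j hj => by simp only [mem_Icc, mem_range] at hj ⊢; omega)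
    fun j hj hjIcc => ?_).symm
  rcases lt_or_ge j m with hjm | hjm
  · rw [coeff_of_lt_order j ((Nat.cast_lt.mpr hjm).trans_le
      (le_order_pow_of_constantCoeff_eq_zero m hf)), zero_mul]
  · obtain rfl : j = n := by simp only [mem_Icc, mem_range] at hj hjIcc; omega
    rw [Nat.sub_self, coeff_zero_eq_constantCoeff_apply, hf, mul_zero]

theorem constantCoeff_cumSeries (lam : ℝ) {Ω : Type*} [MeasurableSpace Ω] (μ : Measure Ω)
    (Y : Ω → ℝ) : PowerSeries.constantCoeff (cumSeries lam μ Y) = 0 := by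
  simp [cumSeries, pscomp, degLogSeries]

theorem S1Y_recurrence_general {Ω : Type*} [MeasurableSpace Ω] (μ : MeasureTheory.Measure Ω)
    (Y : Ω → ℝ) (lam : ℝ) (n k : ℕ) (hk : 1 ≤ k) :
    S1Y lam μ Y n k =
      (1 / (k : ℝ)) * ∑ j ∈ Finset.Icc (k - 1) (n - 1),
        (n.choose j : ℝ) * (-1 : ℝ) ^ (n - j - 1) * S1Y lam μ Y j (k - 1) *
          degCumulant lam μ Y (n - j) := by
  obtain ⟨m, rfl⟩ : ∃ m, k = m + 1 := ⟨k - 1, by omega⟩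
  simp only [S1Y, degCumulant, Nat.add_sub_cancel]
  rw [PowerSeries.coeff_pow_succ_eq_sum_Icc (constantCoeff_cumSeries lam μ Y), mul_sum, sum_div,
    mul_sum, mul_sum]
  refine sum_congr rfl fun j hj => ?_
  rw [mem_Icc] at hj
  have hsign : (-1 : ℝ) ^ (n - (m + 1)) = (-1) ^ (n - j - 1) * (-1) ^ (j - m) := by
    rw [← pow_add]; congr 1; omega
  have hfact : (n.factorial : ℝ) = n.choose j * j.factorial * (n - j).factorial := by
    exact_mod_cast (Nat.choose_mul_factorial_mul_factorial (by omega : j ≤ n)).symm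
  rw [hsign, hfact, Nat.factorial_succ, Nat.cast_mul]
  field_simp

theorem S1Y_recurrence {Ω : Type*} [MeasurableSpace Ω] (μ : MeasureTheory.Measure Ω)
    [MeasureTheory.IsProbabilityMeasure μ] (Y : Ω → ℝ) (hY : Measurable Y)
    (hmom : ∀ n : ℕ, MeasureTheory.Integrable (fun ω => |Y ω| ^ n) μ)
    (lam : ℝ) (hlam : lam ≠ 0)
    (n k : ℕ) (hk : 1 ≤ k) (hkn : k ≤ n) :
    S1Y lam μ Y n k =
      (1 / (k : ℝ)) * ∑ j ∈ Finset.Icc (k - 1) (n - 1),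
        (n.choose j : ℝ) * (-1 : ℝ) ^ (n - j - 1) * S1Y lam μ Y j (k - 1) *
          degCumulant lam μ Y (n - j) :=
  S1Y_recurrence_general μ Y lam n k hk
end
end

section
/- Let Y be a real-valued random variable with all absolute moments finite and fix a nonzero real λ. Then for all integers n≥k≥1, {n brace k}_{Y,λ} = (1/k) Σ_{j=k−1}^{n−1} C(n,j) {j brace k−1}_{Y,λ} E[(Y)_{n−j,λ}], where C(n,j) is the binomial coefficient; in particular, {k brace k}_{Y,λ} = (E[Y])^k for every k≥1. -/
open MeasureTheory Finset

noncomputable section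

/-! Since `F_Y - 1` has zero constant term, writing `(F_Y - 1)^k = (F_Y - 1)^(k-1) · (F_Y - 1)` and
comparing exponential coefficients gives the recurrence; only `j ∈ [k-1, n-1]` contribute, because
`(F_Y - 1)^(k-1)` has order at least `k - 1` and `F_Y - 1` has order at least `1`. For `n = k` the sum
has the single term `j = k - 1`, and `E[(Y)_{1,λ}] = E[Y]`. -/

open PowerSeries

namespace PowerSeries

variable {R : Type*} [CommSemiring R]

theorem factorial_mul_coeff_mul (F G : R⟦X⟧) (n : ℕ) :
    (n.factorial : R) * coeff n (F * G) =
      ∑ j ∈ range (n + 1),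
        (n.choose j : R) * ((j.factorial : R) * coeff j F) *
          (((n - j).factorial : R) * coeff (n - j) G) := by
  rw [coeff_mul, Nat.sum_antidiagonal_eq_sum_range_succ (fun a b => coeff a F * coeff b G),
    mul_sum]
  refine sum_congr rfl fun j hj => ?_
  have hfac : (n.choose j * j.factorial * (n - j).factorial : R) = n.factorial :=
    mod_cast congrArg (Nat.cast : ℕ → R)
      (Nat.choose_mul_factorial_mul_factorial (Nat.lt_succ_iff.mp (mem_range.mp hj)))
  rw [← hfac]
  ring

theorem factorial_mul_coeff_pow_succ {G : R⟦X⟧} (hG : constantCoeff G = 0) (n k : ℕ) :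
    (n.factorial : R) * coeff n (G ^ (k + 1)) =
      ∑ j ∈ Icc k (n - 1),
        (n.choose j : R) * ((j.factorial : R) * coeff j (G ^ k)) *
          (((n - j).factorial : R) * coeff (n - j) G) := by
  rw [pow_succ, factorial_mul_coeff_mul]
  refine (sum_subset (fun j hj => ?_) fun j hj hjI => ?_).symm
  · rw [mem_Icc] at hj
    rw [mem_range]
    omega
  · rw [mem_range] at hj
    rw [mem_Icc] at hjI
    rcases Nat.lt_or_ge j k with hjk | hjk
    · have hlt : (j : ℕ∞) < (G ^ k).order :=
        (Nat.cast_lt.mpr hjk).trans_le (le_order_pow_of_constantCoeff_eq_zero k hG)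
      rw [coeff_of_lt_order j hlt]
      simp
    · obtain rfl : j = n := by omega
      simp [hG]

end PowerSeries

section

variable {Ω : Type*} [MeasurableSpace Ω] (μ : Measure Ω) (Y : Ω → ℝ) (lam : ℝ)

theorem constantCoeff_momSeries_sub_one [IsProbabilityMeasure μ] :
    constantCoeff (momSeries lam μ Y - 1) = 0 := by
  simp [← coeff_zero_eq_constantCoeff, momSeries, dff]

theorem factorial_mul_coeff_momSeries_sub_one {m : ℕ} (hm : m ≠ 0) :
    (m.factorial : ℝ) * coeff m (momSeries lam μ Y - 1) = ∫ ω, dff lam (Y ω) m ∂μ := by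
  rw [map_sub, coeff_one, if_neg hm, sub_zero, momSeries, coeff_mk,
    mul_div_cancel₀ _ (Nat.cast_ne_zero.mpr m.factorial_ne_zero)]

theorem braceY_succ [IsProbabilityMeasure μ] {n : ℕ} (hn : n ≠ 0) (k : ℕ) :
    braceY lam μ Y n (k + 1) =
      (1 / (k + 1 : ℝ)) * ∑ j ∈ Icc k (n - 1),
        (n.choose j : ℝ) * braceY lam μ Y j k * ∫ ω, dff lam (Y ω) (n - j) ∂μ := by
  have hk : (k.factorial : ℝ) ≠ 0 := Nat.cast_ne_zero.mpr k.factorial_ne_zero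
  rw [braceY, factorial_mul_coeff_pow_succ (constantCoeff_momSeries_sub_one μ Y lam),
    Nat.factorial_succ, Nat.cast_mul, Nat.cast_succ, sum_div, mul_sum]
  refine sum_congr rfl fun j hj => ?_
  rw [factorial_mul_coeff_momSeries_sub_one μ Y lam (by grind), braceY]
  field_simp

theorem braceY_self [IsProbabilityMeasure μ] (k : ℕ) :
    braceY lam μ Y k k = (∫ ω, Y ω ∂μ) ^ k := by
  induction k with
  | zero => simp [braceY]
  | succ k ih =>
    have hdff : (fun ω => dff lam (Y ω) 1) = Y := by simp [dff]
    rw [braceY_succ μ Y lam (Nat.add_one_ne_zero k), Nat.add_sub_cancel, Icc_self, sum_singleton,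
      ih, Nat.add_sub_cancel_left, hdff, Nat.choose_succ_self_right, pow_succ]
    push_cast
    field_simp

end

theorem braceY_recurrence_and_diag_general {Ω : Type*} [MeasurableSpace Ω] (μ : MeasureTheory.Measure Ω)
    [MeasureTheory.IsProbabilityMeasure μ] (Y : Ω → ℝ)
    (lam : ℝ) :
    (∀ n k : ℕ, 1 ≤ k → k ≤ n →
        braceY lam μ Y n k =
          (1 / (k : ℝ)) * ∑ j ∈ Finset.Icc (k - 1) (n - 1),
            (n.choose j : ℝ) * braceY lam μ Y j (k - 1) * (∫ ω, dff lam (Y ω) (n - j) ∂μ)) ∧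
      ∀ k : ℕ, 1 ≤ k → braceY lam μ Y k k = (∫ ω, Y ω ∂μ) ^ k := by
  refine ⟨fun n k hk hkn => ?_, fun k _ => braceY_self μ Y lam k⟩
  obtain ⟨m, rfl⟩ : ∃ m, k = m + 1 := ⟨k - 1, by omega⟩
  simpa using braceY_succ μ Y lam (by omega : n ≠ 0) m

theorem braceY_recurrence_and_diag {Ω : Type*} [MeasurableSpace Ω] (μ : MeasureTheory.Measure Ω)
    [MeasureTheory.IsProbabilityMeasure μ] (Y : Ω → ℝ) (hY : Measurable Y)
    (hmom : ∀ n : ℕ, MeasureTheory.Integrable (fun ω => |Y ω| ^ n) μ)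
    (lam : ℝ) (hlam : lam ≠ 0) :
    (∀ n k : ℕ, 1 ≤ k → k ≤ n →
        braceY lam μ Y n k =
          (1 / (k : ℝ)) * ∑ j ∈ Finset.Icc (k - 1) (n - 1),
            (n.choose j : ℝ) * braceY lam μ Y j (k - 1) * (∫ ω, dff lam (Y ω) (n - j) ∂μ)) ∧
      ∀ k : ℕ, 1 ≤ k → braceY lam μ Y k k = (∫ ω, Y ω ∂μ) ^ k :=
  braceY_recurrence_and_diag_general μ Y lam

end
end
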